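/- arXiv:math/0601368 — 2 statements merged into one kernel-verified Lean document; each statement's English description precedes it below -/
import Mathlib

section
/- Let 1 ≤ m ≤ n and k ≥ 1. Then there is an injective group homomorphism τ_k(F_m) → τ_k(F_n); indeed F_m is a homotopy retract of F_n, so this monomorphism is split. -/
/-!
STATEMENT 7: Let `1 ≤ m ≤ n` and `k ≥ 1`.  Then there is an injective group
homomorphism `τ_k(F_m) → τ_k(F_n)`; indeed `F_m` is a homotopy retract of `F_n`
(there are pointed maps `i : F_m → F_n`, `r : F_n → F_m` with `r ∘ i` pointed-homotopic
to the identity), and the monomorphism is split by a homomorphism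
`τ_k(F_n) → τ_k(F_m)`.
-/

open ContinuousMap Topology

/-- The `n`-torus `T^n`. -/
abbrev Torus (n : ℕ) : Type := Fin n → Circle

/-- The `n`-th Fox torus homotopy group `τ_n(X,x₀) = π₁(X^{T^{n-1}}, x̄₀)`. -/
noncomputable abbrev FoxTau (n : ℕ) (X : Type u) [TopologicalSpace X] (x₀ : X) :=
  FundamentalGroup C(Torus (n - 1), X) (ContinuousMap.const (Torus (n - 1)) x₀)

/-- The set collapsed in the reduced suspension of `(W, w₀)`. -/
def suspCollapsed (W : Type u) (w₀ : W) (p : W × unitInterval) : Prop :=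
  p.2 = 0 ∨ p.2 = 1 ∨ p.1 = w₀

/-- The relation generating the reduced suspension quotient. -/
def SuspRel (W : Type u) (w₀ : W) (p q : W × unitInterval) : Prop :=
  suspCollapsed W w₀ p ∧ suspCollapsed W w₀ q

/-- The reduced suspension `ΣW` of the pointed space `(W, w₀)`. -/
def Susp (W : Type u) [TopologicalSpace W] (w₀ : W) : Type u :=
  Quot (SuspRel W w₀)

instance (W : Type u) [TopologicalSpace W] (w₀ : W) : TopologicalSpace (Susp W w₀) :=
  instTopologicalSpaceQuot

/-- Basepoint of the reduced suspension. -/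
def suspBase (W : Type u) [TopologicalSpace W] (w₀ : W) : Susp W w₀ :=
  Quot.mk _ (w₀, 0)

/-- The `n`-th Fox space `F_n = Σ(T^{n-1} ⊔ ∗)`. -/
def FoxSpace (n : ℕ) : Type :=
  Susp (Torus (n - 1) ⊕ Unit) (Sum.inr ())

noncomputable instance (n : ℕ) : TopologicalSpace (FoxSpace n) := by
  unfold FoxSpace; infer_instance

/-- Basepoint of the `n`-th Fox space. -/
noncomputable def foxSpaceBase (n : ℕ) : FoxSpace n :=
  suspBase (Torus (n - 1) ⊕ Unit) (Sum.inr ())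

/-!
Padding a point of `T^{m-1}` with `1`s and forgetting the extra coordinates exhibit
`T^{m-1} ⊔ ∗` as a retract of `T^{n-1} ⊔ ∗`, strictly and not just up to homotopy. Reduced
suspension preserves this, so `F_m` is a strict pointed retract of `F_n`. Postcomposition turns
it into a retraction of the mapping spaces `C(T^{k-1}, F_m) ⇄ C(T^{k-1}, F_n)` preserving the
constant maps, and `π₁` turns that into a split monomorphism.
-/

namespace ContinuousMap

variable {T X Y Z : Type*} [TopologicalSpace T] [TopologicalSpace X] [TopologicalSpace Y]
  [TopologicalSpace Z]

variable (T) in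
def postcomp (f : C(Y, Z)) : C(C(T, Y), C(T, Z)) :=
  ⟨f.comp, continuous_postcomp f⟩

theorem postcomp_apply (f : C(Y, Z)) (g : C(T, Y)) : postcomp T f g = f.comp g := rfl

theorem postcomp_comp_postcomp (g : C(Y, Z)) (f : C(X, Y)) :
    (postcomp T g).comp (postcomp T f) = postcomp T (g.comp f) := rfl

theorem postcomp_id : postcomp T (.id X) = .id C(T, X) := rfl

def sumMap {X' Y' : Type*} [TopologicalSpace X'] [TopologicalSpace Y'] (f : C(X, Y))
    (g : C(X', Y')) : C(X ⊕ X', Y ⊕ Y') :=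
  ⟨Sum.map f g, f.continuous.sumMap g.continuous⟩

theorem sumMap_comp_sumMap {X' Y' Z' : Type*} [TopologicalSpace X'] [TopologicalSpace Y']
    [TopologicalSpace Z'] (f : C(X, Y)) (g : C(Y, Z)) (f' : C(X', Y')) (g' : C(Y', Z')) :
    (sumMap g g').comp (sumMap f f') = sumMap (g.comp f) (g'.comp f') := by
  ext (x | x) <;> rfl

theorem sumMap_id {X' : Type*} [TopologicalSpace X'] : sumMap (.id X) (.id X') = .id _ := by
  ext (x | x) <;> rfl

def finPad {a b : ℕ} (x₀ : X) : C(Fin a → X, Fin b → X) where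
  toFun x i := if hi : (i : ℕ) < a then x ⟨i, hi⟩ else x₀
  continuous_toFun := continuous_pi fun i => by
    split_ifs
    · exact continuous_apply _
    · exact continuous_const

def finRestrict {a b : ℕ} (h : a ≤ b) : C(Fin b → X, Fin a → X) :=
  ⟨fun y => y ∘ Fin.castLE h, by fun_prop⟩

theorem finRestrict_comp_finPad {a b : ℕ} (h : a ≤ b) (x₀ : X) :
    (finRestrict h).comp (finPad x₀) = .id (Fin a → X) := by
  ext x i
  simp [finRestrict, finPad]

end ContinuousMap

theorem FundamentalGroup.leftInverse_mapOfEq_of_comp_eq_id {X Y : Type*} [TopologicalSpace X]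
    [TopologicalSpace Y] {i : C(X, Y)} {r : C(Y, X)} (hri : r.comp i = .id X) {x : X} {y : Y}
    (hi : i x = y) (hr : r y = x) :
    Function.LeftInverse (mapOfEq r hr) (mapOfEq i hi) := by
  intro p
  rw [mapOfEq_apply, mapOfEq_apply]
  induction p using Quotient.inductionOn with | h γ => ?_
  refine congrArg (Quotient.mk _) (Path.ext (funext fun t => ?_))
  exact DFunLike.congr_fun hri (γ t)

theorem suspCollapsed_map {W W' : Type*} {w₀ : W} {w₀' : W'} {f : W → W'} (hf : f w₀ = w₀')
    {p : W × unitInterval} (hp : suspCollapsed W w₀ p) : suspCollapsed W' w₀' (f p.1, p.2) := by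
  rcases hp with h | h | h
  · exact Or.inl h
  · exact Or.inr (Or.inl h)
  · exact Or.inr (Or.inr (by rw [h, hf]))

namespace Susp

variable {W W' W'' : Type*} [TopologicalSpace W] [TopologicalSpace W'] [TopologicalSpace W'']
  {w₀ : W} {w₀' : W'} {w₀'' : W''}

def map (f : C(W, W')) (hf : f w₀ = w₀') : C(Susp W w₀, Susp W' w₀') where
  toFun := Quot.map (fun p => (f p.1, p.2)) fun _ _ h =>
    ⟨suspCollapsed_map hf h.1, suspCollapsed_map hf h.2⟩
  continuous_toFun := continuous_quot_lift _
    (continuous_quot_mk.comp ((f.continuous.comp continuous_fst).prodMk continuous_snd))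

theorem map_suspBase (f : C(W, W')) (hf : f w₀ = w₀') :
    map f hf (suspBase W w₀) = suspBase W' w₀' :=
  congrArg (fun w => Quot.mk _ (w, 0)) hf

theorem map_comp_map (f : C(W, W')) (hf : f w₀ = w₀') (g : C(W', W'')) (hg : g w₀' = w₀'') :
    (map g hg).comp (map f hf) = map (g.comp f) (by rw [comp_apply, hf, hg]) := by
  ext ⟨p⟩
  rfl

theorem map_id : map (.id W) rfl = .id (Susp W w₀) := by
  ext ⟨p⟩
  rfl

end Susp

namespace FoxSpace

variable {l m n : ℕ}

noncomputable def map (f : C(Torus (m - 1), Torus (n - 1))) : C(FoxSpace m, FoxSpace n) :=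
  Susp.map (f.sumMap (.id Unit)) rfl

theorem map_foxSpaceBase (f : C(Torus (m - 1), Torus (n - 1))) :
    map f (foxSpaceBase m) = foxSpaceBase n :=
  Susp.map_suspBase _ _

theorem map_comp_map (f : C(Torus (l - 1), Torus (m - 1))) (g : C(Torus (m - 1), Torus (n - 1))) :
    (map g).comp (map f) = map (g.comp f) := by
  refine (Susp.map_comp_map _ _ _ _).trans ?_
  congr 1
  exact sumMap_comp_sumMap ..

theorem map_id : map (.id (Torus (n - 1))) = .id (FoxSpace n) := by
  simp only [map, sumMap_id]
  exact Susp.map_id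

theorem exists_retraction (h : m ≤ n) :
    ∃ (i : C(FoxSpace m, FoxSpace n)) (r : C(FoxSpace n, FoxSpace m)),
      i (foxSpaceBase m) = foxSpaceBase n ∧ r (foxSpaceBase n) = foxSpaceBase m ∧
      r.comp i = .id (FoxSpace m) := by
  have h' : m - 1 ≤ n - 1 := Nat.sub_le_sub_right h 1
  refine ⟨map (finPad 1), map (finRestrict h'), map_foxSpaceBase _, map_foxSpaceBase _, ?_⟩
  rw [map_comp_map, finRestrict_comp_finPad, map_id]

end FoxSpace

theorem foxTau_foxSpace_monomorphism_general (m n k : ℕ) (hmn : m ≤ n) :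
    (∃ (i : C(FoxSpace m, FoxSpace n)) (r : C(FoxSpace n, FoxSpace m)),
      i (foxSpaceBase m) = foxSpaceBase n ∧ r (foxSpaceBase n) = foxSpaceBase m ∧
      (r.comp i).HomotopicRel (ContinuousMap.id (FoxSpace m)) {foxSpaceBase m}) ∧
    (∃ (φ : FoxTau k (FoxSpace m) (foxSpaceBase m) →* FoxTau k (FoxSpace n) (foxSpaceBase n))
       (ρ : FoxTau k (FoxSpace n) (foxSpaceBase n) →* FoxTau k (FoxSpace m) (foxSpaceBase m)),
      ρ.comp φ = MonoidHom.id (FoxTau k (FoxSpace m) (foxSpaceBase m)) ∧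
      Function.Injective φ) := by
  obtain ⟨i, r, hi, hr, hri⟩ := FoxSpace.exists_retraction hmn
  have hri_postcomp : (postcomp (Torus (k - 1)) r).comp (postcomp _ i) = .id _ := by
    rw [postcomp_comp_postcomp, hri, postcomp_id]
  have hi_const :
      postcomp (Torus (k - 1)) i (const _ (foxSpaceBase m)) = const _ (foxSpaceBase n) := by
    rw [postcomp_apply, comp_const, hi]
  have hr_const :
      postcomp (Torus (k - 1)) r (const _ (foxSpaceBase n)) = const _ (foxSpaceBase m) := by
    rw [postcomp_apply, comp_const, hr]
  have hsplit := FundamentalGroup.leftInverse_mapOfEq_of_comp_eq_id hri_postcomp hi_const hr_const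
  exact ⟨⟨i, r, hi, hr, hri ▸ .refl _⟩, FundamentalGroup.mapOfEq _ hi_const,
    FundamentalGroup.mapOfEq _ hr_const, MonoidHom.ext hsplit, hsplit.injective⟩

theorem foxTau_foxSpace_monomorphism (m n k : ℕ) (hm : 1 ≤ m) (hmn : m ≤ n) (hk : 1 ≤ k) :
    (∃ (i : C(FoxSpace m, FoxSpace n)) (r : C(FoxSpace n, FoxSpace m)),
      i (foxSpaceBase m) = foxSpaceBase n ∧ r (foxSpaceBase n) = foxSpaceBase m ∧
      (r.comp i).HomotopicRel (ContinuousMap.id (FoxSpace m)) {foxSpaceBase m}) ∧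
    (∃ (φ : FoxTau k (FoxSpace m) (foxSpaceBase m) →* FoxTau k (FoxSpace n) (foxSpaceBase n))
       (ρ : FoxTau k (FoxSpace n) (foxSpaceBase n) →* FoxTau k (FoxSpace m) (foxSpaceBase m)),
      ρ.comp φ = MonoidHom.id (FoxTau k (FoxSpace m) (foxSpaceBase m)) ∧
      Function.Injective φ) :=
  foxTau_foxSpace_monomorphism_general m n k hmn
end

section
/- Let A, B, C be pointed spaces having the homotopy type of compactly generated Hausdorff spaces, X a pointed space, and let α ∈ [ΣA,X], β ∈ [ΣB,X], γ ∈ [ΣC,X] with images ᾱ, β̄, γ̄ in the Fox group τ_{A×B×C}(X) under the suspensions of the coordinate projections. Then, in τ_{A×B×C}(X), (Σt₂₁₃)*([[β̄⁻¹, ᾱ], γ̄]^{β̄}) · (Σt₃₂₁)*([[γ̄⁻¹, β̄], ᾱ]^{γ̄}) · (Σt₁₃₂)*([[ᾱ⁻¹, γ̄], β̄]^{ᾱ}) = 1, where [·,·] denotes the group-theoretic commutator, x^y = yxy⁻¹, and t_{ijk} : A×B×C → (the product in the indicated order) are the coordinate-permuting homeomorphisms inducing (Σt_{ijk})* on τ-groups.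 -/
/-!
Pulling back along a coordinate permutation `t` turns the image of a class under a
projection into its image under the composite projection, which is again a projection of
`A × B × C`. So all three factors are words in the images `ᾱ, β̄, γ̄` in `τ_{A×B×C}(X)`, and
their product is trivial by the Hall–Witt identity in that group.
-/
open ContinuousMap Topology CategoryTheory

universe u

noncomputable section

/-- The homomorphism on fundamental groups induced by a continuous map. -/
def indHom {X Y : Type u} [TopologicalSpace X] [TopologicalSpace Y] (f : C(X, Y)) (x : X) :
    FundamentalGroup X x →* FundamentalGroup Y (f x) :=
  CategoryTheory.Functor.mapEnd ⟨x⟩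
    (FundamentalGroupoid.fundamentalGroupoidFunctor.map (X := TopCat.of X) (Y := TopCat.of Y) (TopCat.ofHom f))

/-- `indHom` with a specified image basepoint. -/
def indHom' {X Y : Type u} [TopologicalSpace X] [TopologicalSpace Y] (f : C(X, Y)) (x : X)
    (y : Y) (h : f x = y) : FundamentalGroup X x →* FundamentalGroup Y y :=
  h ▸ indHom f x

variable (X : Type u) [TopologicalSpace X] (x₀ : X)

/-- The Fox group `τ_W(X) = [Σ(W ⊔ ∗), X]`, realized via the exponential law as the
fundamental group of the space of unbased maps `W → X` based at the constant map. -/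
abbrev Tau (W : Type u) [TopologicalSpace W] : Type u :=
  FundamentalGroup C(W, X) (ContinuousMap.const W x₀)

/-- The space of based maps `(A,a₀) → (X,x₀)`; its fundamental group (at the constant
map) is the group `[ΣA, X]`, by the exponential law. -/
def BasedMaps (A : Type u) [TopologicalSpace A] (a₀ : A) : Type u :=
  {f : C(A, X) // f a₀ = x₀}

instance (A : Type u) [TopologicalSpace A] (a₀ : A) :
    TopologicalSpace (BasedMaps X x₀ A a₀) := instTopologicalSpaceSubtype

/-- The constant based map. -/
def basedMapsBase (A : Type u) [TopologicalSpace A] (a₀ : A) : BasedMaps X x₀ A a₀ :=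
  ⟨ContinuousMap.const A x₀, rfl⟩

/-- The group `[ΣA, X]`, realized as `π₁` of the based mapping space. -/
abbrev SigmaGrp (A : Type u) [TopologicalSpace A] (a₀ : A) : Type u :=
  FundamentalGroup (BasedMaps X x₀ A a₀) (basedMapsBase X x₀ A a₀)

/-- Pullback `τ_W(X) → τ_V(X)` along a continuous map `V → W`. -/
def tauMap {V W : Type u} [TopologicalSpace V] [TopologicalSpace W] (p : C(V, W)) :
    Tau X x₀ W →* Tau X x₀ V :=
  indHom' ⟨fun f => f.comp p, ContinuousMap.continuous_precomp p⟩
    (ContinuousMap.const W x₀) (ContinuousMap.const V x₀) (by ext v; rfl)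

/-- The canonical homomorphism `[ΣA, X] → τ_A(X)`. -/
def sigmaToTau (A : Type u) [TopologicalSpace A] (a₀ : A) :
    SigmaGrp X x₀ A a₀ →* Tau X x₀ A :=
  indHom' ⟨Subtype.val, continuous_subtype_val⟩ (basedMapsBase X x₀ A a₀)
    (ContinuousMap.const A x₀) rfl

/-- The embedding `[ΣA, X] → τ_W(X)` determined by a map `p : W → A` (e.g. a product
projection). -/
def sigmaToTauAlong {A W : Type u} [TopologicalSpace A] [TopologicalSpace W]
    (p : C(W, A)) (a₀ : A) : SigmaGrp X x₀ A a₀ →* Tau X x₀ W :=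
  (tauMap X x₀ p).comp (sigmaToTau X x₀ A a₀)

/-- Group-theoretic commutator `(a,b) = a·b·a⁻¹·b⁻¹`. -/
def grpComm {G : Type v} [Group G] (a b : G) : G := a * b * a⁻¹ * b⁻¹

/-- Conjugation `a^b = b·a·b⁻¹`. -/
def grpConj {G : Type v} [Group G] (a b : G) : G := b * a * b⁻¹

/-- `(X,x₀)` and `(Y,y₀)` are pointed homotopy equivalent. -/
def PtdHomotopyEquiv (X : Type u) (Y : Type u) [TopologicalSpace X] [TopologicalSpace Y]
    (x₀ : X) (y₀ : Y) : Prop :=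
  ∃ (f : C(X, Y)) (g : C(Y, X)), f x₀ = y₀ ∧ g y₀ = x₀ ∧
    (g.comp f).HomotopicRel (ContinuousMap.id X) {x₀} ∧
    (f.comp g).HomotopicRel (ContinuousMap.id Y) {y₀}

/-- `(A,a₀)` has the pointed homotopy type of a compactly generated Hausdorff space. -/
def HasCGHaussHomotopyType (A : Type u) [TopologicalSpace A] (a₀ : A) : Prop :=
  ∃ (A' : Type u) (_ : TopologicalSpace A') (a₀' : A'),
    T2Space A' ∧ CompactlyGeneratedSpace A' ∧ PtdHomotopyEquiv A A' a₀ a₀'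

theorem indHom_comp_apply {X Y Z : Type u} [TopologicalSpace X] [TopologicalSpace Y]
    [TopologicalSpace Z] (f : C(X, Y)) (g : C(Y, Z)) (x : X) (a : FundamentalGroup X x) :
    indHom (g.comp f) x a = indHom g (f x) (indHom f x a) := by
  induction a using Quotient.inductionOn
  rfl

theorem tauMap_tauMap {U V W : Type u} [TopologicalSpace U] [TopologicalSpace V]
    [TopologicalSpace W] (t : C(U, V)) (p : C(V, W)) (s : Tau X x₀ W) :
    tauMap X x₀ t (tauMap X x₀ p s) = tauMap X x₀ (p.comp t) s :=
  -- the casts in `tauMap` are along equalities of definitionally equal constant maps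
  (indHom_comp_apply _ _ _ s).symm

theorem tauMap_sigmaToTauAlong {A V W : Type u} [TopologicalSpace A] [TopologicalSpace V]
    [TopologicalSpace W] (t : C(V, W)) (p : C(W, A)) (a₀ : A) (α : SigmaGrp X x₀ A a₀) :
    tauMap X x₀ t (sigmaToTauAlong X x₀ p a₀ α) = sigmaToTauAlong X x₀ (p.comp t) a₀ α :=
  tauMap_tauMap X x₀ t p _

section Group

open scoped commutatorElement

variable {G H F : Type*} [Group G] [Group H] [FunLike F G H] [MonoidHomClass F G H]

theorem grpComm_eq_commutatorElement (a b : G) : grpComm a b = ⁅a, b⁆ := rfl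

theorem map_grpComm (f : F) (a b : G) : f (grpComm a b) = grpComm (f a) (f b) := by
  simp only [grpComm, map_mul, map_inv]

theorem map_grpConj (f : F) (a b : G) : f (grpConj a b) = grpConj (f a) (f b) := by
  simp only [grpConj, map_mul, map_inv]

theorem grpConj_grpComm_grpComm_inv_mul (a b c : G) :
    grpConj (grpComm (grpComm b⁻¹ a) c) b * grpConj (grpComm (grpComm c⁻¹ b) a) c *
      grpConj (grpComm (grpComm a⁻¹ c) b) a = 1 := by
  simpa only [grpConj, grpComm_eq_commutatorElement, mul_assoc] using
    conj_commutatorElement_left_commutatorElement_mul b a c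

end Group

theorem jacobi_identity_commutators
    (A B C X : Type u) [TopologicalSpace A] [TopologicalSpace B] [TopologicalSpace C]
    [TopologicalSpace X] (a₀ : A) (b₀ : B) (c₀ : C) (x₀ : X)
    (α : SigmaGrp X x₀ A a₀) (β : SigmaGrp X x₀ B b₀) (γ : SigmaGrp X x₀ C c₀) :
    -- images of α, β, γ in τ_{B×A×C}(X)
    (let αb := sigmaToTauAlong X x₀ (⟨fun p => p.2.1, by fun_prop⟩ : C(B × A × C, A)) a₀ α
     let βb := sigmaToTauAlong X x₀ (⟨fun p => p.1, by fun_prop⟩ : C(B × A × C, B)) b₀ β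
     let γb := sigmaToTauAlong X x₀ (⟨fun p => p.2.2, by fun_prop⟩ : C(B × A × C, C)) c₀ γ
     -- images of α, β, γ in τ_{C×B×A}(X)
     let αc := sigmaToTauAlong X x₀ (⟨fun p => p.2.2, by fun_prop⟩ : C(C × B × A, A)) a₀ α
     let βc := sigmaToTauAlong X x₀ (⟨fun p => p.2.1, by fun_prop⟩ : C(C × B × A, B)) b₀ β
     let γc := sigmaToTauAlong X x₀ (⟨fun p => p.1, by fun_prop⟩ : C(C × B × A, C)) c₀ γ
     -- images of α, β, γ in τ_{A×C×B}(X)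
     let αa := sigmaToTauAlong X x₀ (⟨fun p => p.1, by fun_prop⟩ : C(A × C × B, A)) a₀ α
     let βa := sigmaToTauAlong X x₀ (⟨fun p => p.2.2, by fun_prop⟩ : C(A × C × B, B)) b₀ β
     let γa := sigmaToTauAlong X x₀ (⟨fun p => p.2.1, by fun_prop⟩ : C(A × C × B, C)) c₀ γ
     -- twisting maps
     let t213 : C(A × B × C, B × A × C) := ⟨fun p => (p.2.1, p.1, p.2.2), by fun_prop⟩
     let t321 : C(A × B × C, C × B × A) := ⟨fun p => (p.2.2, p.2.1, p.1), by fun_prop⟩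
     let t132 : C(A × B × C, A × C × B) := ⟨fun p => (p.1, p.2.2, p.2.1), by fun_prop⟩
     tauMap X x₀ t213 (grpConj (grpComm (grpComm βb⁻¹ αb) γb) βb) *
     tauMap X x₀ t321 (grpConj (grpComm (grpComm γc⁻¹ βc) αc) γc) *
     tauMap X x₀ t132 (grpConj (grpComm (grpComm αa⁻¹ γa) βa) αa) = 1) := by
  simp only [map_grpConj, map_grpComm, map_inv, tauMap_sigmaToTauAlong]
  -- each `pr.comp t` is definitionally the corresponding projection of `A × B × C`
  exact grpConj_grpComm_grpComm_inv_mul _ _ _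
end
end
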